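/- Let σ > 0, let D ≥ 1, and let w_1, …, w_D be independent random vectors in ℝ^d whose coordinates are independent real Gaussian random variables with mean 0 and variance 1/σ². Then for all x, y ∈ ℝ^d, exp(x·y / σ²) = exp(‖x‖²/(2σ²) + ‖y‖²/(2σ²)) · E[φ(x) · φ(y)]; that is, exp(‖x‖²/(2σ²) + ‖y‖²/(2σ²)) · φ(x) · φ(y) is an unbiased estimator of exp(x·y/σ²). -/

import Mathlib

/-!
Expanding the feature maps gives `φ(x) · φ(y) = D⁻¹ ∑ⱼ cos (wⱼ · (x - y))`. Since the coordinates
of `wⱼ` are independent `N(0, 1/σ²)`, the characteristic function of `wⱼ · z` factorises, so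
`wⱼ · z ~ N(0, ‖z‖²/σ²)` and `E[cos (wⱼ · z)] = Re E[exp (i wⱼ · z)] = exp (-‖z‖²/(2σ²))`.
It remains to expand `‖x - y‖² = ‖x‖² - 2 x · y + ‖y‖²`.
-/

open scoped RealInnerProductSpace BigOperators
open MeasureTheory ProbabilityTheory

/-- The random feature map `φ(x) = D^{-1/2} (sin(w₁·x), …, sin(w_D·x), cos(w₁·x), …, cos(w_D·x))`. -/
noncomputable def randomFeatureMap {d D : ℕ} (w : Fin D → EuclideanSpace ℝ (Fin d))
    (x : EuclideanSpace ℝ (Fin d)) : EuclideanSpace ℝ (Fin D ⊕ Fin D) :=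
  WithLp.toLp 2 (fun i => Real.sqrt (1 / D) *
    Sum.elim (fun j => Real.sin ⟪w j, x⟫) (fun j => Real.cos ⟪w j, x⟫) i)

open scoped NNReal

namespace ProbabilityTheory

lemma integral_cos_mul_eq_re_charFun (ν : Measure ℝ) [IsFiniteMeasure ν] (t : ℝ) :
    ∫ u, Real.cos (t * u) ∂ν = (charFun ν t).re := by
  have hint : Integrable (fun u : ℝ ↦ Complex.exp (t * u * Complex.I)) ν :=
    Integrable.of_bound (by fun_prop) 1 (ae_of_all _ fun u ↦ by
      simpa using (Complex.norm_exp_ofReal_mul_I (t * u)).le)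
  rw [charFun_apply_real, ← RCLike.re_to_complex, ← integral_re hint]
  simp [← Complex.ofReal_mul, Complex.exp_ofReal_mul_I_re]

lemma integral_cos_mul_gaussianReal (v : ℝ≥0) (t : ℝ) :
    ∫ u, Real.cos (t * u) ∂gaussianReal 0 v = Real.exp (-(v * t ^ 2 / 2)) := by
  have h : (t * (0 : ℝ) * Complex.I - v * t ^ 2 / 2 : ℂ) = ((-(v * t ^ 2 / 2) : ℝ) : ℂ) := by
    push_cast; ring
  rw [integral_cos_mul_eq_re_charFun, charFun_gaussianReal, h, Complex.exp_ofReal_re]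

variable {Ω ι : Type*} [MeasurableSpace Ω] {μ : Measure Ω}

lemma integral_cos_eq_exp_of_map_eq_gaussianReal {X : Ω → ℝ} {v : ℝ≥0}
    (hX : μ.map X = gaussianReal 0 v) : ∫ ω, Real.cos (X ω) ∂μ = Real.exp (-(v / 2)) := by
  have hXm : AEMeasurable X μ := aemeasurable_of_map_neZero (by rw [hX]; infer_instance)
  calc ∫ ω, Real.cos (X ω) ∂μ = ∫ u, Real.cos (1 * u) ∂μ.map X := by
        simpa using (integral_map hXm (by fun_prop)).symm
    _ = Real.exp (-(v / 2)) := by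
        rw [hX, integral_cos_mul_gaussianReal, one_pow, mul_one]

variable [IsProbabilityMeasure μ]

lemma iIndepFun.map_sum_mul_eq_gaussianReal [Fintype ι] {X : ι → Ω → ℝ} (hX : iIndepFun X μ)
    {v : ℝ≥0} (hlaw : ∀ i, μ.map (X i) = gaussianReal 0 v) (c : ι → ℝ) :
    μ.map (fun ω ↦ ∑ i, c i * X i ω) = gaussianReal 0 ((∑ i, ‖c i‖₊ ^ 2) * v) := by
  have hmeas : ∀ i, AEMeasurable (X i) μ :=
    fun i ↦ aemeasurable_of_map_neZero (by rw [hlaw i]; infer_instance)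
  have hcX : iIndepFun (fun i ω ↦ c i * X i ω) μ :=
    hX.comp (fun i u ↦ c i * u) fun i ↦ measurable_const_mul _
  refine Measure.ext_of_charFun (funext fun t ↦ ?_)
  rw [hcX.charFun_map_fun_sum_eq_prod (fun i ↦ (hmeas i).const_mul _), Finset.prod_apply]
  simp_rw [charFun_map_mul_comp (hmeas _), hlaw, charFun_gaussianReal, ← Complex.exp_sum]
  congr 1
  simp only [NNReal.coe_mul, NNReal.coe_sum, NNReal.coe_pow, coe_nnnorm, Real.norm_eq_abs, sq_abs]
  push_cast [mul_zero, zero_mul, zero_sub, Finset.sum_neg_distrib, Finset.sum_mul, Finset.sum_div]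
  exact congrArg Neg.neg (Finset.sum_congr rfl fun i _ ↦ by ring)

lemma iIndepFun.map_inner_eq_gaussianReal [Fintype ι] {W : Ω → EuclideanSpace ℝ ι}
    (hW : iIndepFun (fun i ω ↦ W ω i) μ) {v : ℝ≥0}
    (hlaw : ∀ i, μ.map (fun ω ↦ W ω i) = gaussianReal 0 v) (z : EuclideanSpace ℝ ι) :
    μ.map (fun ω ↦ ⟪W ω, z⟫) = gaussianReal 0 (‖z‖₊ ^ 2 * v) := by
  have h : (fun ω ↦ ⟪W ω, z⟫) = fun ω ↦ ∑ i, z i * W ω i := by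
    funext ω
    simp [PiLp.inner_apply]
  rw [h, hW.map_sum_mul_eq_gaussianReal hlaw, EuclideanSpace.nnnorm_eq, NNReal.sq_sqrt]

end ProbabilityTheory

lemma inner_randomFeatureMap {d D : ℕ} (w : Fin D → EuclideanSpace ℝ (Fin d))
    (x y : EuclideanSpace ℝ (Fin d)) :
    ⟪randomFeatureMap w x, randomFeatureMap w y⟫ = 1 / D * ∑ j, Real.cos ⟪w j, x - y⟫ := by
  simp only [randomFeatureMap, PiLp.inner_apply, Fintype.sum_sum_type, Sum.elim_inl,
    Sum.elim_inr, RCLike.inner_apply, conj_trivial, inner_sub_right, Real.cos_sub, Finset.mul_sum,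
    ← Finset.sum_add_distrib]
  refine Finset.sum_congr rfl fun j _ ↦ ?_
  have hsq : Real.sqrt (1 / D) * Real.sqrt (1 / D) = 1 / D := Real.mul_self_sqrt (by positivity)
  linear_combination
    (Real.sin ⟪w j, x⟫ * Real.sin ⟪w j, y⟫ + Real.cos ⟪w j, x⟫ * Real.cos ⟪w j, y⟫) * hsq

/-- Unbiased random feature estimate of the dot-then-exponentiate function: with `D ≥ 1` random
vectors `w₁, …, w_D ∈ ℝ^d` whose `D·d` coordinates are jointly independent `N(0, 1/σ²)` Gaussians,
`exp(x·y/σ²) = exp(‖x‖²/(2σ²) + ‖y‖²/(2σ²)) · E[φ(x) · φ(y)]`. -/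
theorem exp_inner_eq_exp_norm_mul_expectation {d D : ℕ} (hD : 1 ≤ D) (σ : ℝ)
    {Ω : Type*} [MeasurableSpace Ω] (μ : Measure Ω) [IsProbabilityMeasure μ]
    (W : Fin D → Ω → EuclideanSpace ℝ (Fin d))
    (hindep : iIndepFun
      (fun (p : Fin D × Fin d) ω => W p.1 ω p.2) μ)
    (hgauss : ∀ (i : Fin D) (j : Fin d),
      Measure.map (fun ω => W i ω j) μ = gaussianReal 0 ⟨1 / σ ^ 2, by positivity⟩)
    (x y : EuclideanSpace ℝ (Fin d)) :
    Real.exp (⟪x, y⟫ / σ ^ 2) =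
      Real.exp (‖x‖ ^ 2 / (2 * σ ^ 2) + ‖y‖ ^ 2 / (2 * σ ^ 2)) *
        ∫ ω, ⟪randomFeatureMap (fun i => W i ω) x, randomFeatureMap (fun i => W i ω) y⟫ ∂μ := by
  have hlaw (j : Fin D) := (hindep.precomp (Prod.mk_right_injective j)).map_inner_eq_gaussianReal
    (hgauss j) (x - y)
  have hint (j : Fin D) : Integrable (fun ω ↦ Real.cos ⟪W j ω, x - y⟫) μ := by
    have hm : AEMeasurable (fun ω ↦ ⟪W j ω, x - y⟫) μ :=
      aemeasurable_of_map_neZero (by rw [hlaw j]; infer_instance)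
    exact .of_bound hm.cos.aestronglyMeasurable 1
      (ae_of_all _ fun ω ↦ by simpa using Real.abs_cos_le_one _)
  simp_rw [inner_randomFeatureMap, integral_const_mul, integral_finsetSum _ fun j _ ↦ hint j,
    integral_cos_eq_exp_of_map_eq_gaussianReal (hlaw _), Finset.sum_const, Finset.card_univ,
    Fintype.card_fin, nsmul_eq_mul]
  have hD' : (D : ℝ) ≠ 0 := by exact_mod_cast Nat.one_le_iff_ne_zero.mp hD
  rw [one_div, inv_mul_cancel_left₀ hD', ← Real.exp_add]
  congr 1
  -- `⟨1 / σ ^ 2, _⟩` is a bare `Subtype.mk`, which the `NNReal` coercion lemmas do not see through.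
  have hvar : ((‖x - y‖₊ ^ 2 * ⟨1 / σ ^ 2, by positivity⟩ : ℝ≥0) : ℝ) = ‖x - y‖ ^ 2 / σ ^ 2 := by
    change (‖x - y‖₊ : ℝ) ^ 2 * (1 / σ ^ 2) = _
    rw [coe_nnnorm, mul_one_div]
  rw [hvar, norm_sub_sq_real]
  ring
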